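/- Let X, H, E, Z, S, y be random variables with S a deterministic function of Z, Z a deterministic function of E (so σ(S) ⊆ σ(Z) ⊆ σ(E)). Then I(H; y | X, S) ≤ I(H; y | X, E) + [I(H; E | X) − I(H; Z | X)] + [I(H; Z | X) − I(H; S | X)], where each bracketed term is non-negative. -/

import Mathlib

/-!
With `entropy p V = -∑ ω, p ω * log P(V = V ω)`, every conditional entropy is a difference
`H(Y | X) = H(X, Y) - H(X)`, and `H(V)` depends only on the partition of the sample space that `V`
induces. This turns the chain rule `I(A; (B, D) | X) = I(A; D | X) + I(A; B | X, D)` and the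
invariance `I(A; (W, f W) | X) = I(A; W | X)` into linear identities between entropies.
`I(A; B | C)` is the Kullback–Leibler divergence of the law of `(C, A, B)` from
`P(c, a) P(c, b) / P(c)`, hence non-negative by `log x ≥ 1 - 1/x`; with the chain rule this gives
data processing, `I(A; f W | X) ≤ I(A; W | X)`. The brackets of the theorem are data-processing
gaps, and the inequality is data processing for `(y, S) = F (y, E)` expanded by the chain rule.
-/

open Finset Real

/-- Probability that a random variable `X` on a finite sample space with
weight function `p` takes the value `x`. -/
noncomputable def pr {Ω : Type*} [Fintype Ω] (p : Ω → ℝ) {α : Type*} [DecidableEq α]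
    (X : Ω → α) (x : α) : ℝ :=
  ∑ ω, if X ω = x then p ω else 0

/-- Conditional Shannon entropy `H(Y | X)` for finite random variables. -/
noncomputable def condEnt {Ω : Type*} [Fintype Ω] (p : Ω → ℝ) {α β : Type*}
    [Fintype α] [Fintype β] [DecidableEq α] [DecidableEq β]
    (Y : Ω → α) (X : Ω → β) : ℝ :=
  -∑ x : β, ∑ y : α,
    pr p (fun ω => (X ω, Y ω)) (x, y) *
      Real.log (pr p (fun ω => (X ω, Y ω)) (x, y) / pr p X x)

/-- Conditional mutual information `I(A; B | C)` for finite random variables,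
defined symmetrically via conditional entropies. -/
noncomputable def condMI {Ω : Type*} [Fintype Ω] (p : Ω → ℝ) {α β γ : Type*}
    [Fintype α] [Fintype β] [Fintype γ] [DecidableEq α] [DecidableEq β] [DecidableEq γ]
    (A : Ω → α) (B : Ω → β) (C : Ω → γ) : ℝ :=
  condEnt p A C + condEnt p B C - condEnt p (fun ω => (A ω, B ω)) C

lemma sub_le_mul_log_div {q r : ℝ} (hq : 0 ≤ q) (hr : 0 ≤ r) (hqr : 0 < q → 0 < r) :
    q - r ≤ q * log (q / r) := by
  rcases hq.eq_or_lt with rfl | hq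
  · simpa using hr
  have hlog := mul_le_mul_of_nonneg_left
    (Real.one_sub_inv_le_log_of_pos (div_pos hq (hqr hq))) hq.le
  rwa [inv_div, mul_sub, mul_one, mul_div_cancel₀ _ hq.ne'] at hlog

lemma sum_sub_sum_le_sum_mul_log_div {ι : Type*} (s : Finset ι) {q r : ι → ℝ}
    (hq : ∀ i ∈ s, 0 ≤ q i) (hr : ∀ i ∈ s, 0 ≤ r i) (hqr : ∀ i ∈ s, 0 < q i → 0 < r i) :
    ∑ i ∈ s, q i - ∑ i ∈ s, r i ≤ ∑ i ∈ s, q i * log (q i / r i) := by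
  rw [← Finset.sum_sub_distrib]
  exact Finset.sum_le_sum fun i hi => sub_le_mul_log_div (hq i hi) (hr i hi) (hqr i hi)

section FiniteProbability

variable {Ω : Type*} [Fintype Ω] {p : Ω → ℝ}

lemma pr_nonneg (hp : ∀ ω, 0 ≤ p ω) {α : Type*} [DecidableEq α] (V : Ω → α) (v : α) :
    0 ≤ pr p V v :=
  Finset.sum_nonneg fun ω _ => by split <;> simp [hp ω]

lemma pr_pos_iff (hp : ∀ ω, 0 ≤ p ω) {α : Type*} [DecidableEq α] (V : Ω → α) (v : α) :
    0 < pr p V v ↔ ∃ ω, V ω = v ∧ 0 < p ω := by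
  constructor
  · intro hpos
    obtain ⟨ω, -, hω⟩ := Finset.exists_lt_of_sum_lt (s := Finset.univ) (f := fun _ => (0 : ℝ))
      (by simpa [pr] using hpos)
    by_cases hV : V ω = v
    · exact ⟨ω, hV, by simpa [hV] using hω⟩
    · simp [hV] at hω
  · rintro ⟨ω, rfl, hω⟩
    refine hω.trans_le ?_
    have := Finset.single_le_sum (f := fun ω' => if V ω' = V ω then p ω' else 0)
      (fun ω' _ => by split <;> simp [hp ω']) (Finset.mem_univ ω)
    simpa [pr] using this

lemma pr_apply_pos (hp : ∀ ω, 0 ≤ p ω) {α : Type*} [DecidableEq α] (V : Ω → α) {ω : Ω}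
    (hω : 0 < p ω) : 0 < pr p V (V ω) :=
  (pr_pos_iff hp V _).2 ⟨ω, rfl, hω⟩

lemma sum_pr_mul {α : Type*} [Fintype α] [DecidableEq α] (V : Ω → α) (f : α → ℝ) :
    ∑ v, pr p V v * f v = ∑ ω, p ω * f (V ω) := by
  simp only [pr, Finset.sum_mul]
  rw [Finset.sum_comm]
  simp [ite_mul]

lemma sum_pr {α : Type*} [Fintype α] [DecidableEq α] (V : Ω → α) :
    ∑ v, pr p V v = ∑ ω, p ω := by
  simpa using sum_pr_mul (p := p) V fun _ => 1

lemma sum_pr_prod_mk {α β : Type*} [DecidableEq α] [Fintype β] [DecidableEq β]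
    (X : Ω → α) (Y : Ω → β) (x : α) :
    ∑ b, pr p (fun ω => (X ω, Y ω)) (x, b) = pr p X x := by
  simp only [pr]
  rw [Finset.sum_comm]
  refine Finset.sum_congr rfl fun ω _ => ?_
  by_cases hx : X ω = x <;> simp [hx]

end FiniteProbability

section Entropy

variable {Ω : Type*} [Fintype Ω] (p : Ω → ℝ)

noncomputable def entropy {α : Type*} [DecidableEq α] (V : Ω → α) : ℝ :=
  ∑ ω, p ω * -log (pr p V (V ω))

variable {p}

lemma entropy_congr {α β : Type*} [DecidableEq α] [DecidableEq β] {A : Ω → α} {B : Ω → β}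
    (h : ∀ ω ω', A ω = A ω' ↔ B ω = B ω') : entropy p A = entropy p B := by
  have hpr : ∀ ω, pr p A (A ω) = pr p B (B ω) := fun ω =>
    Finset.sum_congr rfl fun ω' _ => if_congr (h ω' ω) rfl rfl
  simp only [entropy, hpr]

lemma entropy_comp_injective {α β : Type*} [DecidableEq α] [DecidableEq β] (V : Ω → α)
    {F : α → β} (hF : Function.Injective F) : entropy p (fun ω => F (V ω)) = entropy p V :=
  entropy_congr fun _ _ => hF.eq_iff

lemma condEnt_eq_entropy_sub (hp : ∀ ω, 0 ≤ p ω) {α β : Type*} [Fintype α] [Fintype β]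
    [DecidableEq α] [DecidableEq β] (Y : Ω → α) (X : Ω → β) :
    condEnt p Y X = entropy p (fun ω => (X ω, Y ω)) - entropy p X := by
  rw [condEnt, ← Fintype.sum_prod_type' (f := fun x y =>
      pr p (fun ω => (X ω, Y ω)) (x, y) * log (pr p (fun ω => (X ω, Y ω)) (x, y) / pr p X x)),
    sum_pr_mul (fun ω => (X ω, Y ω)) fun v => log (pr p (fun ω => (X ω, Y ω)) v / pr p X v.1),
    entropy, entropy, ← Finset.sum_sub_distrib, ← Finset.sum_neg_distrib]
  refine Finset.sum_congr rfl fun ω _ => ?_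
  rcases (hp ω).eq_or_lt with hω | hω
  · simp [← hω]
  rw [log_div (pr_apply_pos hp _ hω).ne' (pr_apply_pos hp _ hω).ne']
  ring

lemma condMI_eq_entropy (hp : ∀ ω, 0 ≤ p ω) {α β γ : Type*} [Fintype α] [Fintype β] [Fintype γ]
    [DecidableEq α] [DecidableEq β] [DecidableEq γ] (A : Ω → α) (B : Ω → β) (C : Ω → γ) :
    condMI p A B C = entropy p (fun ω => (C ω, A ω)) + entropy p (fun ω => (C ω, B ω))
      - entropy p (fun ω => (C ω, A ω, B ω)) - entropy p C := by
  rw [condMI, condEnt_eq_entropy_sub hp, condEnt_eq_entropy_sub hp, condEnt_eq_entropy_sub hp]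
  ring

end Entropy

section ConditionalMutualInformation

variable {Ω : Type*} [Fintype Ω] {p : Ω → ℝ}
  {α β γ δ : Type*} [Fintype α] [Fintype β] [Fintype γ] [Fintype δ]
  [DecidableEq α] [DecidableEq β] [DecidableEq γ] [DecidableEq δ]

lemma condMI_prod_right (hp : ∀ ω, 0 ≤ p ω) (A : Ω → α) (B : Ω → β) (D : Ω → δ) (X : Ω → γ) :
    condMI p A (fun ω => (B ω, D ω)) X
      = condMI p A D X + condMI p A B (fun ω => (X ω, D ω)) := by
  rw [condMI_eq_entropy hp, condMI_eq_entropy hp, condMI_eq_entropy hp,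
    entropy_congr (A := fun ω => ((X ω, D ω), A ω)) (B := fun ω => (X ω, A ω, D ω))
      fun _ _ => by simp only [Prod.mk.injEq]; tauto,
    entropy_congr (A := fun ω => ((X ω, D ω), B ω)) (B := fun ω => (X ω, B ω, D ω))
      fun _ _ => by simp only [Prod.mk.injEq]; tauto,
    entropy_congr (A := fun ω => ((X ω, D ω), A ω, B ω)) (B := fun ω => (X ω, A ω, B ω, D ω))
      fun _ _ => by simp only [Prod.mk.injEq]; tauto]
  ring

lemma condMI_prod_comp_right (hp : ∀ ω, 0 ≤ p ω) (A : Ω → α) (W : Ω → β) (f : β → δ)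
    (X : Ω → γ) : condMI p A (fun ω => (W ω, f (W ω))) X = condMI p A W X := by
  have hgraph : Function.Injective fun w : β => (w, f w) := fun _ _ h => congrArg Prod.fst h
  have hXW : entropy p (fun ω => (X ω, W ω, f (W ω))) = entropy p (fun ω => (X ω, W ω)) :=
    entropy_comp_injective (fun ω => (X ω, W ω)) (F := Prod.map id fun w => (w, f w))
      (Function.injective_id.prodMap hgraph)
  have hXAW : entropy p (fun ω => (X ω, A ω, W ω, f (W ω)))
      = entropy p (fun ω => (X ω, A ω, W ω)) :=
    entropy_comp_injective (fun ω => (X ω, A ω, W ω))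
      (F := Prod.map id (Prod.map id fun w => (w, f w)))
      (Function.injective_id.prodMap (Function.injective_id.prodMap hgraph))
  rw [condMI_eq_entropy hp, condMI_eq_entropy hp, hXW, hXAW]

lemma condMI_nonneg (hp : ∀ ω, 0 ≤ p ω) (A : Ω → α) (B : Ω → β) (C : Ω → γ) :
    0 ≤ condMI p A B C := by
  set V := fun ω => (C ω, A ω, B ω)
  set q := pr p V
  set r : γ × α × β → ℝ := fun v =>
    pr p (fun ω => (C ω, A ω)) (v.1, v.2.1) * pr p (fun ω => (C ω, B ω)) (v.1, v.2.2) / pr p C v.1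
  have hKL : condMI p A B C = ∑ v, q v * log (q v / r v) := by
    rw [sum_pr_mul, condMI_eq_entropy hp]
    simp only [entropy, ← Finset.sum_add_distrib, ← Finset.sum_sub_distrib]
    refine Finset.sum_congr rfl fun ω _ => ?_
    rcases (hp ω).eq_or_lt with hω | hω
    · simp [← hω]
    have hCAB := pr_apply_pos hp V hω
    have hCA := pr_apply_pos hp (fun ω => (C ω, A ω)) hω
    have hCB := pr_apply_pos hp (fun ω => (C ω, B ω)) hω
    have hC := pr_apply_pos hp C hω
    simp only [q, r, V] at hCAB ⊢
    rw [log_div hCAB.ne' (by positivity), log_div (by positivity) hC.ne', log_mul hCA.ne' hCB.ne']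
    ring
  -- `P(c) * P(c) / P(c) = P(c)` holds also when `P(c) = 0`, as `x / 0 = 0`
  have hmass : ∑ v, r v = ∑ v, q v := by
    simp only [r, q, sum_pr, Fintype.sum_prod_type, ← Finset.sum_div, ← Finset.sum_mul_sum,
      sum_pr_prod_mk, mul_self_div_self]
  have hGibbs := sum_sub_sum_le_sum_mul_log_div Finset.univ (q := q) (r := r)
    (fun v _ => pr_nonneg hp V v)
    (fun v _ => div_nonneg (mul_nonneg (pr_nonneg hp _ _) (pr_nonneg hp _ _)) (pr_nonneg hp _ _))
    (fun v _ hq => by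
      obtain ⟨ω, rfl, hω⟩ := (pr_pos_iff hp V v).1 hq
      have := pr_apply_pos hp C hω
      have := pr_apply_pos hp (fun ω => (C ω, A ω)) hω
      have := pr_apply_pos hp (fun ω => (C ω, B ω)) hω
      simp only [r, V]; positivity)
  linarith

lemma condMI_comp_le (hp : ∀ ω, 0 ≤ p ω) (A : Ω → α) (W : Ω → β) (f : β → δ) (X : Ω → γ) :
    condMI p A (fun ω => f (W ω)) X ≤ condMI p A W X := by
  have hchain := condMI_prod_right hp A W (fun ω => f (W ω)) X
  rw [condMI_prod_comp_right hp] at hchain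
  linarith [condMI_nonneg hp A W fun ω => (X ω, f (W ω))]

end ConditionalMutualInformation

theorem stmt_4_general {Ω : Type*} [Fintype Ω] (p : Ω → ℝ)
    (hp : ∀ ω, 0 ≤ p ω)
    {𝒳 ℋ ℰ 𝒵 𝒮 𝒴 : Type*} [Fintype 𝒳] [Fintype ℋ] [Fintype ℰ] [Fintype 𝒵]
    [Fintype 𝒮] [Fintype 𝒴]
    [DecidableEq 𝒳] [DecidableEq ℋ] [DecidableEq ℰ] [DecidableEq 𝒵]
    [DecidableEq 𝒮] [DecidableEq 𝒴]
    (X : Ω → 𝒳) (H : Ω → ℋ) (E : Ω → ℰ) (y : Ω → 𝒴)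
    (h : ℰ → 𝒵) (g : 𝒵 → 𝒮) (Z : Ω → 𝒵) (S : Ω → 𝒮)
    (hZ : Z = fun ω => h (E ω)) (hS : S = fun ω => g (Z ω)) :
    condMI p H y (fun ω => (X ω, S ω))
        ≤ condMI p H y (fun ω => (X ω, E ω))
          + (condMI p H E X - condMI p H Z X)
          + (condMI p H Z X - condMI p H S X) ∧
    0 ≤ condMI p H E X - condMI p H Z X ∧
    0 ≤ condMI p H Z X - condMI p H S X := by
  have hZE : condMI p H Z X ≤ condMI p H E X := hZ ▸ condMI_comp_le hp H E h X
  have hSZ : condMI p H S X ≤ condMI p H Z X := hS ▸ condMI_comp_le hp H Z g X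
  have hSE : condMI p H (fun ω => (y ω, S ω)) X ≤ condMI p H (fun ω => (y ω, E ω)) X := by
    subst hS hZ
    exact condMI_comp_le hp H (fun ω => (y ω, E ω)) (Prod.map id (g ∘ h)) X
  have hS_chain := condMI_prod_right hp H y S X
  have hE_chain := condMI_prod_right hp H y E X
  exact ⟨by linarith, sub_nonneg.2 hZE, sub_nonneg.2 hSZ⟩

/-- Pipeline decomposition: with `S = g ∘ Z` and `Z = h ∘ E`,
`I(H; y | X, S) ≤ I(H; y | X, E) + [I(H;E|X) − I(H;Z|X)] + [I(H;Z|X) − I(H;S|X)]`,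
and each bracketed term is non-negative. -/
theorem stmt_4 {Ω : Type*} [Fintype Ω] (p : Ω → ℝ)
    (hp : ∀ ω, 0 ≤ p ω) (hp1 : ∑ ω, p ω = 1)
    {𝒳 ℋ ℰ 𝒵 𝒮 𝒴 : Type*} [Fintype 𝒳] [Fintype ℋ] [Fintype ℰ] [Fintype 𝒵]
    [Fintype 𝒮] [Fintype 𝒴]
    [DecidableEq 𝒳] [DecidableEq ℋ] [DecidableEq ℰ] [DecidableEq 𝒵]
    [DecidableEq 𝒮] [DecidableEq 𝒴]
    (X : Ω → 𝒳) (H : Ω → ℋ) (E : Ω → ℰ) (y : Ω → 𝒴)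
    (h : ℰ → 𝒵) (g : 𝒵 → 𝒮) (Z : Ω → 𝒵) (S : Ω → 𝒮)
    (hZ : Z = fun ω => h (E ω)) (hS : S = fun ω => g (Z ω)) :
    condMI p H y (fun ω => (X ω, S ω))
        ≤ condMI p H y (fun ω => (X ω, E ω))
          + (condMI p H E X - condMI p H Z X)
          + (condMI p H Z X - condMI p H S X) ∧
    0 ≤ condMI p H E X - condMI p H Z X ∧
    0 ≤ condMI p H Z X - condMI p H S X :=
  stmt_4_general p hp X H E y h g Z S hZ hS
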